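/- arXiv:1603.07735 — 3 statements merged into one kernel-verified Lean document; each statement's English description precedes it below -/
import Mathlib

section
/- If P ⊆ ℝⁿ is a polytope in standard form (i.e. P equals the intersection of the non-negative orthant with the affine hull of P), then every face F of P is also in standard form: F equals the intersection of the non-negative orthant with the affine hull of F. -/
/-- The support of a non-negative vector, as a 0/1 vector. -/
noncomputable def supp {n : ℕ} (v : Fin n → ℝ) : Fin n → ℝ := fun i => if 0 < v i then 1 else 0

/-- A set is in standard form if it equals the intersection of the non-negative
orthant with its affine hull. -/
def StdForm {n : ℕ} (P : Set (Fin n → ℝ)) : Prop :=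
  P = {x | ∀ i, 0 ≤ x i} ∩ (affineSpan ℝ P : Set (Fin n → ℝ))

/-- `F` is a face of `P`: the zero set in `P` of a valid linear inequality. -/
def IsFace {n : ℕ} (P F : Set (Fin n → ℝ)) : Prop :=
  ∃ (a : Fin n → ℝ) (b : ℝ), (∀ x ∈ P, b ≤ ∑ i, a i * x i) ∧
    F = {x ∈ P | ∑ i, a i * x i = b}

/-!
A face `F` of `P` is `P ∩ H` for the hyperplane `H` of its supporting inequality. Then
`Aff F ⊆ Aff P ∩ H`, so a non-negative point of `Aff F` lies in `P` (as `P` is in standard form)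
and in `H`, hence in `F`.
-/

theorem eq_inter_affineSpan_of_eq_inter_affineSubspace {k V Pt : Type*} [Ring k]
    [AddCommGroup V] [Module k V] [AddTorsor V Pt] {C P F : Set Pt} (S : AffineSubspace k Pt)
    (hP : P = C ∩ affineSpan k P) (hF : F = P ∩ S) :
    F = C ∩ affineSpan k F := by
  have hFP : F ⊆ P := hF ▸ Set.inter_subset_left
  have hFS : affineSpan k F ≤ S := affineSpan_le.mpr (hF ▸ Set.inter_subset_right)
  refine Set.Subset.antisymm (fun x hx => ⟨(hP ▸ hFP hx).1, subset_affineSpan k F hx⟩) ?_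
  rintro x ⟨hxC, hxF⟩
  have hxP : x ∈ P := hP ▸ ⟨hxC, affineSpan_mono k hFP hxF⟩
  exact hF ▸ ⟨hxP, hFS hxF⟩

def levelHyperplane {n : ℕ} (a : Fin n → ℝ) (b : ℝ) : AffineSubspace ℝ (Fin n → ℝ) :=
  (affineSpan ℝ {b}).comap (dotProductBilin ℝ ℝ a).toAffineMap

theorem mem_levelHyperplane {n : ℕ} {a x : Fin n → ℝ} {b : ℝ} :
    x ∈ levelHyperplane a b ↔ ∑ i, a i * x i = b := by
  rw [levelHyperplane, AffineSubspace.mem_comap, AffineSubspace.mem_affineSpan_singleton]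
  rfl

theorem stmt0_general {n : ℕ} (P : Set (Fin n → ℝ))
    (hStd : StdForm P) (F : Set (Fin n → ℝ)) (hF : IsFace P F) :
    F = {x | ∀ i, 0 ≤ x i} ∩ (affineSpan ℝ F : Set (Fin n → ℝ)) := by
  obtain ⟨a, b, -, rfl⟩ := hF
  refine eq_inter_affineSpan_of_eq_inter_affineSubspace (levelHyperplane a b) hStd ?_
  ext x
  simp only [Set.mem_ofPred_eq, Set.mem_inter_iff, SetLike.mem_coe, mem_levelHyperplane]

theorem stmt0 {n : ℕ} (P : Set (Fin n → ℝ)) (hComp : IsCompact P) (hConv : Convex ℝ P)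
    (hStd : StdForm P) (F : Set (Fin n → ℝ)) (hF : IsFace P F) :
    F = {x | ∀ i, 0 ≤ x i} ∩ (affineSpan ℝ F : Set (Fin n → ℝ)) :=
  stmt0_general P hStd F hF
end

section
/- Let P ⊆ ℝⁿ be a polytope in standard form. Then the map sending a non-empty face F of P to supp(x) for any x in the relative interior of F is a well-defined order-isomorphism from the poset of non-empty faces of P (ordered by inclusion) onto the poset S(P) = {supp(x) : x ∈ P} (ordered componentwise). -/
/-!
A point `x` in the relative interior of a face `F` can be pushed a little further along the ray
from any `y ∈ F` through `x` without leaving `F ⊆ ℝⁿ₊`; hence `supp y ≤ supp x`: `x` has the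
largest support in `F`. Conversely, in standard form `P` is cut out of its affine hull by the sign
constraints only, so any `y ∈ P` with `supp y ≤ supp x` can be pushed beyond in the same way,
staying in `P`; a valid inequality that is tight at `x` is then tight at `y`. So
`F = {y ∈ P | supp y ≤ supp x}`, which makes `F ↦ supp x` an order embedding, and every `supp x`
with `x ∈ P` is attained by the face `{y ∈ P | supp y ≤ supp x}`.
-/

open Set Filter Topology

lemma exists_pos_of_eventually_nhds_zero {p : ℝ → Prop} (h : ∀ᶠ t in 𝓝 0, p t) :
    ∃ t > 0, p t :=
  ((h.filter_mono nhdsWithin_le_nhds).and (self_mem_nhdsWithin : Ioi (0 : ℝ) ∈ 𝓝[>] 0)).exists.imp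
    fun _ ht => ⟨ht.2, ht.1⟩

lemma AffineSubspace.add_smul_sub_mem {E : Type*} [AddCommGroup E] [Module ℝ E]
    (Q : AffineSubspace ℝ E) {x y : E} (hx : x ∈ Q) (hy : y ∈ Q) (t : ℝ) :
    x + t • (x - y) ∈ Q := by
  simpa [vsub_eq_sub, vadd_eq_add, add_comm] using Q.smul_vsub_vadd_mem t hx hy hx

lemma exists_add_smul_sub_mem_of_mem_intrinsicInterior {E : Type*} [AddCommGroup E] [Module ℝ E]
    [TopologicalSpace E] [IsTopologicalAddGroup E] [ContinuousSMul ℝ E] {s : Set E} {x y : E}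
    (hx : x ∈ intrinsicInterior ℝ s) (hy : y ∈ s) :
    ∃ ε : ℝ, 0 < ε ∧ x + ε • (x - y) ∈ s := by
  obtain ⟨q, hq, rfl⟩ := hx
  let c : ℝ → affineSpan ℝ s := fun t =>
    ⟨_, (affineSpan ℝ s).add_smul_sub_mem q.2 (subset_affineSpan ℝ s hy) t⟩
  have hc : Continuous c := by fun_prop
  have hc0 : c 0 = q := by simp [c]
  obtain ⟨ε, hε, hcε⟩ := exists_pos_of_eventually_nhds_zero <|
    hc.continuousAt.preimage_mem_nhds (hc0 ▸ isOpen_interior.mem_nhds hq)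
  exact ⟨ε, hε, interior_subset (s := ((↑) : affineSpan ℝ s → E) ⁻¹' s) hcε⟩

section Support

variable {n : ℕ}

lemma supp_le_supp_iff {x y : Fin n → ℝ} : supp y ≤ supp x ↔ ∀ i, 0 < y i → 0 < x i := by
  refine forall_congr' fun i => ?_
  unfold supp
  split_ifs <;> norm_num [*]

lemma supp_le_supp_of_mem_intrinsicInterior {F : Set (Fin n → ℝ)} (hF : ∀ z ∈ F, ∀ i, 0 ≤ z i)
    {x y : Fin n → ℝ} (hx : x ∈ intrinsicInterior ℝ F) (hy : y ∈ F) : supp y ≤ supp x := by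
  obtain ⟨ε, hε, hz⟩ := exists_add_smul_sub_mem_of_mem_intrinsicInterior hx hy
  refine supp_le_supp_iff.2 fun i hyi => ?_
  have hzi : 0 ≤ x i + ε * (x i - y i) := hF _ hz i
  nlinarith

lemma StdForm.nonneg {P : Set (Fin n → ℝ)} (hStd : StdForm P) {x : Fin n → ℝ} (hx : x ∈ P) :
    ∀ i, 0 ≤ x i := by
  rw [hStd] at hx
  exact hx.1

lemma StdForm.exists_add_smul_sub_mem {P : Set (Fin n → ℝ)} (hStd : StdForm P)
    {x y : Fin n → ℝ} (hx : x ∈ P) (hy : y ∈ P) (hxy : supp y ≤ supp x) :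
    ∃ ε : ℝ, 0 < ε ∧ x + ε • (x - y) ∈ P := by
  have hcoord : ∀ i, ∀ᶠ t in 𝓝 (0 : ℝ), 0 ≤ x i + t * (x i - y i) := fun i => by
    rcases (hStd.nonneg hx i).lt_or_eq with hxi | hxi
    · have : Tendsto (fun t : ℝ => x i + t * (x i - y i)) (𝓝 0) (𝓝 (x i)) :=
        (continuous_const.add (continuous_id.mul continuous_const)).tendsto' 0 _ (by simp)
      exact (this.eventually_const_lt hxi).mono fun _ => le_of_lt
    · have hyi : y i = 0 :=
        le_antisymm (not_lt.1 fun h => (supp_le_supp_iff.1 hxy i h).ne hxi) (hStd.nonneg hy i)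
      simp [← hxi, hyi]
  obtain ⟨ε, hε, hz⟩ := exists_pos_of_eventually_nhds_zero (eventually_all.2 hcoord)
  refine ⟨ε, hε, ?_⟩
  rw [hStd]
  exact ⟨hz, (affineSpan ℝ P).add_smul_sub_mem (subset_affineSpan ℝ P hx)
    (subset_affineSpan ℝ P hy) ε⟩

end Support

section Faces

variable {n : ℕ} {P F G : Set (Fin n → ℝ)}

lemma IsFace.subset (hF : IsFace P F) : F ⊆ P := by
  obtain ⟨a, b, -, rfl⟩ := hF
  exact sep_subset _ _

lemma IsFace.nonneg (hStd : StdForm P) (hF : IsFace P F) : ∀ z ∈ F, ∀ i, 0 ≤ z i :=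
  fun _ hz => hStd.nonneg (hF.subset hz)

lemma IsFace.convex (hF : IsFace P F) (hP : Convex ℝ P) : Convex ℝ F := by
  obtain ⟨a, b, -, rfl⟩ := hF
  exact hP.inter (convex_hyperplane (dotProductBilin ℝ ℝ a).isLinear b)

lemma IsFace.mem_of_add_smul_sub_mem (hF : IsFace P F) {x y : Fin n → ℝ} {ε : ℝ} (hε : 0 < ε)
    (hx : x ∈ F) (hy : y ∈ P) (hz : x + ε • (x - y) ∈ P) : y ∈ F := by
  obtain ⟨a, b, hvalid, rfl⟩ := hF
  refine ⟨hy, le_antisymm ?_ (hvalid y hy)⟩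
  have hlin : ∑ i, a i * (x + ε • (x - y)) i
      = (1 + ε) * ∑ i, a i * x i - ε * ∑ i, a i * y i := by
    simp only [Pi.add_apply, Pi.smul_apply, Pi.sub_apply, smul_eq_mul, Finset.mul_sum,
      ← Finset.sum_sub_distrib]
    exact Finset.sum_congr rfl fun i _ => by ring
  have hzb := hvalid _ hz
  rw [hlin, hx.2] at hzb
  nlinarith

lemma isFace_sep_supp_le (hP : ∀ z ∈ P, ∀ i, 0 ≤ z i) (x : Fin n → ℝ) :
    IsFace P {y ∈ P | supp y ≤ supp x} := by
  have hterm : ∀ y ∈ P, ∀ i, 0 ≤ (if 0 < x i then 0 else 1) * y i := fun y hy i =>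
    mul_nonneg (by split_ifs <;> norm_num) (hP y hy i)
  refine ⟨fun i => if 0 < x i then 0 else 1, 0, fun y hy => Finset.sum_nonneg fun i _ =>
    hterm y hy i, ?_⟩
  ext y
  refine and_congr_right fun hy => ?_
  rw [Finset.sum_eq_zero_iff_of_nonneg fun i _ => hterm y hy i, supp_le_supp_iff]
  refine forall_congr' fun i => ?_
  by_cases hxi : 0 < x i
  · simp [hxi]
  · simpa [hxi] using (hP y hy i).ge_iff_eq'

lemma IsFace.eq_sep_supp_le (hStd : StdForm P) (hF : IsFace P F) {x : Fin n → ℝ}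
    (hx : x ∈ intrinsicInterior ℝ F) : F = {y ∈ P | supp y ≤ supp x} := by
  refine Subset.antisymm
    (fun y hy => ⟨hF.subset hy, supp_le_supp_of_mem_intrinsicInterior (hF.nonneg hStd) hx hy⟩) ?_
  rintro y ⟨hyP, hyx⟩
  have hxF := intrinsicInterior_subset hx
  obtain ⟨ε, hε, hz⟩ := hStd.exists_add_smul_sub_mem (hF.subset hxF) hyP hyx
  exact hF.mem_of_add_smul_sub_mem hε hxF hyP hz

lemma supp_le_supp_iff_subset_of_mem_intrinsicInterior (hStd : StdForm P) (hF : IsFace P F)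
    (hG : IsFace P G) {x y : Fin n → ℝ} (hx : x ∈ intrinsicInterior ℝ F)
    (hy : y ∈ intrinsicInterior ℝ G) : supp x ≤ supp y ↔ F ⊆ G := by
  refine ⟨fun hxy => ?_, fun hFG => ?_⟩
  · rw [hF.eq_sep_supp_le hStd hx, hG.eq_sep_supp_le hStd hy]
    exact fun z hz => ⟨hz.1, hz.2.trans hxy⟩
  · exact supp_le_supp_of_mem_intrinsicInterior (hG.nonneg hStd) hy
      (hFG (intrinsicInterior_subset hx))

lemma supp_eq_of_mem_intrinsicInterior (hStd : StdForm P) (hF : IsFace P F) {x y : Fin n → ℝ}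
    (hx : x ∈ intrinsicInterior ℝ F) (hy : y ∈ intrinsicInterior ℝ F) : supp x = supp y :=
  le_antisymm ((supp_le_supp_iff_subset_of_mem_intrinsicInterior hStd hF hF hx hy).2 le_rfl)
    ((supp_le_supp_iff_subset_of_mem_intrinsicInterior hStd hF hF hy hx).2 le_rfl)

end Faces

section FaceLattice

variable {n : ℕ} {P : Set (Fin n → ℝ)}

noncomputable def relintPoint (hConv : Convex ℝ P)
    (F : {F : Set (Fin n → ℝ) // IsFace P F ∧ F.Nonempty}) : Fin n → ℝ :=
  (F.2.2.intrinsicInterior (F.2.1.convex hConv)).some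

lemma relintPoint_mem (hConv : Convex ℝ P)
    (F : {F : Set (Fin n → ℝ) // IsFace P F ∧ F.Nonempty}) :
    relintPoint hConv F ∈ intrinsicInterior ℝ (F : Set (Fin n → ℝ)) :=
  Nonempty.some_mem _

noncomputable def faceSuppEmbedding (hConv : Convex ℝ P) (hStd : StdForm P) :
    {F : Set (Fin n → ℝ) // IsFace P F ∧ F.Nonempty} ↪o {u : Fin n → ℝ // u ∈ supp '' P} :=
  OrderEmbedding.ofMapLEIff
    (fun F => ⟨supp (relintPoint hConv F), _,
      F.2.1.subset (intrinsicInterior_subset (relintPoint_mem hConv F)), rfl⟩)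
    fun F G => supp_le_supp_iff_subset_of_mem_intrinsicInterior hStd F.2.1 G.2.1
      (relintPoint_mem hConv F) (relintPoint_mem hConv G)

lemma faceSuppEmbedding_surjective (hConv : Convex ℝ P) (hStd : StdForm P) :
    Function.Surjective (faceSuppEmbedding hConv hStd) := by
  rintro ⟨_, x, hx, rfl⟩
  have hG := isFace_sep_supp_le (fun _ => hStd.nonneg) x
  let G : {F : Set (Fin n → ℝ) // IsFace P F ∧ F.Nonempty} := ⟨_, hG, x, hx, le_rfl⟩
  have hz := relintPoint_mem hConv G
  refine ⟨G, Subtype.ext (le_antisymm (intrinsicInterior_subset hz).2 ?_)⟩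
  exact supp_le_supp_of_mem_intrinsicInterior (hG.nonneg hStd) hz ⟨hx, le_rfl⟩

end FaceLattice

theorem stmt9_general {n : ℕ} (P : Set (Fin n → ℝ)) (hConv : Convex ℝ P)
    (hStd : StdForm P) :
    ∃ φ : {F : Set (Fin n → ℝ) // IsFace P F ∧ F.Nonempty} ≃o {u : Fin n → ℝ // u ∈ supp '' P},
      ∀ (F : {F : Set (Fin n → ℝ) // IsFace P F ∧ F.Nonempty}) (x : Fin n → ℝ),
        x ∈ intrinsicInterior ℝ (F : Set (Fin n → ℝ)) → (φ F : Fin n → ℝ) = supp x :=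
  ⟨.ofSurjective _ (faceSuppEmbedding_surjective hConv hStd), fun F _ hx =>
    supp_eq_of_mem_intrinsicInterior hStd F.2.1 (relintPoint_mem hConv F) hx⟩

theorem stmt9 {n : ℕ} (P : Set (Fin n → ℝ)) (hComp : IsCompact P) (hConv : Convex ℝ P)
    (hStd : StdForm P) :
    ∃ φ : {F : Set (Fin n → ℝ) // IsFace P F ∧ F.Nonempty} ≃o {u : Fin n → ℝ // u ∈ supp '' P},
      ∀ (F : {F : Set (Fin n → ℝ) // IsFace P F ∧ F.Nonempty}) (x : Fin n → ℝ),
        x ∈ intrinsicInterior ℝ (F : Set (Fin n → ℝ)) → (φ F : Fin n → ℝ) = supp x :=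
  stmt9_general P hConv hStd
end

section
/- There exists a finite measurement scenario and a no-signalling possibilistic (Boolean) empirical model s over it that is not the possibilistic collapse of any no-signalling probabilistic empirical model: concretely, consider X = {A,B,C,D}, contexts all 2-element subsets, outcomes O = {0,1,2}, and the model with possible joint outcomes AB ↦ {00,10,21}, AC ↦ {00,11,21}, AD ↦ {01,10,21}, BC ↦ {00,11}, BD ↦ {00,11}, CD ↦ {01,10}. Then there is no family of probability distributions e_C on O^C with agreeing marginals on overlaps whose supports are exactly these sets. -/
/-!
Only the variables `A, B, C` matter. In `BC` the outcomes `B = 0` and `C = 0` occur only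
together, and likewise `C = 0` and `A = 0` in `AC`; so no-signalling forces
`P(B = 0) = P(C = 0) = P(A = 0)`. But in `AB` the outcome `A = 0` occurs only with `B = 0`,
while `B = 0` also occurs with `A = 1`, which forces `P(A = 0) < P(B = 0)`.
-/

/-- The possible joint outcomes of the model `s`: variables `A,B,C,D` are
`0,1,2,3`, and for `i < j` the tuple `(i, j, a, b)` is listed iff the joint
outcome assigning `a` to variable `i` and `b` to variable `j` is possible.
Contexts: `AB ↦ {00,10,21}`, `AC ↦ {00,11,21}`, `AD ↦ {01,10,21}`,
`BC ↦ {00,11}`, `BD ↦ {00,11}`, `CD ↦ {01,10}`. -/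
def possible (i j : Fin 4) (a b : Fin 3) : Prop :=
  ((i : ℕ), (j : ℕ), (a : ℕ), (b : ℕ)) ∈
    [(0,1,0,0), (0,1,1,0), (0,1,2,1),
     (0,2,0,0), (0,2,1,1), (0,2,2,1),
     (0,3,0,1), (0,3,1,0), (0,3,2,1),
     (1,2,0,0), (1,2,1,1),
     (1,3,0,0), (1,3,1,1),
     (2,3,0,1), (2,3,1,0)]

section JointDistribution

variable {α β : Type*} [Fintype α] [Fintype β]
  (q : α → β → ℝ) {a : α} {b : β}

theorem sum_row_eq_sum_col (hrow : ∀ b', b' ≠ b → q a b' = 0)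
    (hcol : ∀ a', a' ≠ a → q a' b = 0) : ∑ b', q a b' = ∑ a', q a' b := by
  rw [Fintype.sum_eq_single b hrow, Fintype.sum_eq_single a hcol]

theorem sum_row_lt_sum_col (hcol : ∀ a', 0 ≤ q a' b) (hrow : ∀ b', b' ≠ b → q a b' = 0)
    {a' : α} (ha' : a' ≠ a) (hpos : 0 < q a' b) : ∑ b', q a b' < ∑ a'', q a'' b := by
  classical
  calc ∑ b', q a b' = q a b := Fintype.sum_eq_single b hrow
    _ < q a b + q a' b := by linarith
    _ = ∑ a'' ∈ {a, a'}, q a'' b := (Finset.sum_pair (f := (q · b)) ha'.symm).symm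
    _ ≤ ∑ a'', q a'' b := Finset.sum_le_univ_sum_of_nonneg hcol

end JointDistribution

instance (i j : Fin 4) (a b : Fin 3) : Decidable (possible i j a b) := by
  unfold possible; infer_instance

/-- There is no no-signalling probabilistic empirical model over the scenario with
variables `{A,B,C,D}`, contexts all two-element subsets, and outcomes `{0,1,2}`,
whose supports are exactly those of the possibilistic model `s`.
Here `p i j a b` is the probability, in the context `{i,j}` (for `i ≠ j`), of the
joint outcome assigning `a` to `i` and `b` to `j`; the symmetry condition says that
`p i j` and `p j i` describe the same distribution on the context `{i,j}`, and the
marginal condition expresses no-signalling on the overlaps of contexts. -/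
theorem stmt18 :
    ¬ ∃ p : Fin 4 → Fin 4 → Fin 3 → Fin 3 → ℝ,
      (∀ i j a b, 0 ≤ p i j a b) ∧
      (∀ i j, i ≠ j → ∑ a, ∑ b, p i j a b = 1) ∧
      (∀ i j a b, p i j a b = p j i b a) ∧
      (∀ i j j' a, i ≠ j → i ≠ j' → ∑ b, p i j a b = ∑ b, p i j' a b) ∧
      (∀ i j a b, i < j → (0 < p i j a b ↔ possible i j a b)) := by
  rintro ⟨p, hnonneg, -, hsym, hmarg, hsupp⟩
  have hzero : ∀ i j a b, i < j → ¬ possible i j a b → p i j a b = 0 := fun i j a b hij h =>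
    le_antisymm (not_lt.1 (mt (hsupp i j a b hij).1 h)) (hnonneg i j a b)
  have hcol : ∀ i j b, ∑ a, p i j a b = ∑ a, p j i b a := fun i j b =>
    Finset.sum_congr rfl fun a _ => hsym i j a b
  have hBC : ∑ c, p 1 2 0 c = ∑ b, p 2 1 0 b := by
    rw [← hcol 1 2 0]
    exact sum_row_eq_sum_col _ (fun c hc => hzero 1 2 0 c (by decide) (by revert c; decide))
      (fun b hb => hzero 1 2 b 0 (by decide) (by revert b; decide))
  have hAC : ∑ c, p 0 2 0 c = ∑ a, p 2 0 0 a := by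
    rw [← hcol 0 2 0]
    exact sum_row_eq_sum_col _ (fun c hc => hzero 0 2 0 c (by decide) (by revert c; decide))
      (fun a ha => hzero 0 2 a 0 (by decide) (by revert a; decide))
  have hAB : ∑ b, p 0 1 0 b < ∑ a, p 1 0 0 a := by
    rw [← hcol 0 1 0]
    exact sum_row_lt_sum_col _ (fun a => hnonneg 0 1 a 0)
      (fun b hb => hzero 0 1 0 b (by decide) (by revert b; decide)) (a' := 1) (by decide)
      ((hsupp 0 1 1 0 (by decide)).2 (by decide))
  have hB := hmarg 1 0 2 0 (by decide) (by decide)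
  have hC := hmarg 2 1 0 0 (by decide) (by decide)
  have hA := hmarg 0 1 2 0 (by decide) (by decide)
  linarith
end
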